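/- arXiv:2604.12541 — 5 statements merged into one kernel-verified Lean document; each statement's English description precedes it below -/
import Mathlib

section
/- The polynomial f_n = x_1 y_1 + ... + x_n y_n - 1 is irreducible in the polynomial ring k[x_1,...,x_n,y_1,...,y_n] over a field k, for n ≥ 1. -/
/-!
Splitting off the first pair of variables, `f_{n+1} = x₀ y₀ + f_n(x₁, …, y₁, …)`. As a polynomial
in `y₀` this is linear with coefficients `x₀` and `f_n`; `x₀` is prime and does not divide `f_n`,
whose constant term is `-1`, so the coefficients are coprime and the polynomial is irreducible.
-/

/-- The polynomial `f_n = x_1 y_1 + ⋯ + x_n y_n - 1` in `k[x_1,…,x_n,y_1,…,y_n]`,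
where `Sum.inl i` plays the role of `x_i` and `Sum.inr i` of `y_i`. -/
noncomputable def quadricOddPoly (k : Type*) [Field k] (n : ℕ) :
    MvPolynomial (Fin n ⊕ Fin n) k :=
  (∑ i : Fin n, MvPolynomial.X (Sum.inl i) * MvPolynomial.X (Sum.inr i)) - 1

namespace MvPolynomial

theorem irreducible_X_mul_X_add {σ R : Type*} [CommRing R] [IsDomain R] {i j : σ} (hij : i ≠ j)
    {q : MvPolynomial σ R} (hj : j ∉ q.vars) (hq : ¬X i ∣ q) :
    Irreducible (X i * X j + q) :=
  irreducible_mul_X_add _ _ _ (X_ne_zero i) (by simpa [vars_X] using hij.symm) hj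
    (X_prime.irreducible.isRelPrime_iff_not_dvd.mpr hq)

theorem not_X_dvd_of_constantCoeff_ne_zero {σ R : Type*} [CommSemiring R] {i : σ}
    {q : MvPolynomial σ R} (hq : constantCoeff q ≠ 0) : ¬X i ∣ q := fun h =>
  hq (zero_dvd_iff.mp (by simpa using map_dvd constantCoeff h))

theorem notMem_vars_rename {σ τ R : Type*} [CommSemiring R] {f : σ → τ} {j : τ}
    (hj : j ∉ Set.range f) (p : MvPolynomial σ R) : j ∉ (rename f p).vars := by
  classical
  intro h
  obtain ⟨i, -, rfl⟩ := Finset.mem_image.mp (vars_rename f p h)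
  exact hj ⟨i, rfl⟩

end MvPolynomial

open MvPolynomial

theorem quadricOddPoly_succ (k : Type*) [Field k] (m : ℕ) :
    quadricOddPoly k (m + 1) =
      X (.inl 0) * X (.inr 0) + rename (Sum.map Fin.succ Fin.succ) (quadricOddPoly k m) := by
  rw [quadricOddPoly, quadricOddPoly, Fin.sum_univ_succ, add_sub_assoc]
  simp

theorem quadricOddPoly_irreducible (k : Type*) [Field k] (n : ℕ) (hn : 1 ≤ n) :
    Irreducible (quadricOddPoly k n) := by
  obtain ⟨m, rfl⟩ := Nat.exists_eq_add_of_le' hn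
  rw [quadricOddPoly_succ]
  refine irreducible_X_mul_X_add Sum.inl_ne_inr (notMem_vars_rename ?_ _)
    (not_X_dvd_of_constantCoeff_ne_zero ?_)
  · rintro ⟨_ | i, h⟩ <;> simp at h
  · simp [quadricOddPoly]
end

section
/- The 4×4 matrix M with rows (z, 0, x_2, -x_1), (0, z, y_1, y_2), (y_2, x_1, 1-z, 0), (-y_1, x_2, 0, 1-z) over the ring R = k[x_1,x_2,y_1,y_2,z]/(x_1 y_1 + x_2 y_2 - z(1-z)) satisfies M^2 = M. -/
open MvPolynomial

/-- The coordinate ring `R = k[x₁,x₂,y₁,y₂,z]/(x₁y₁ + x₂y₂ - z(1-z))` of `Q₄`,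
with variables indexed `0 ↦ x₁, 1 ↦ x₂, 2 ↦ y₁, 3 ↦ y₂, 4 ↦ z`. -/
abbrev Q4Ring (k : Type*) [CommRing k] : Type _ :=
  MvPolynomial (Fin 5) k ⧸
    Ideal.span {(X 0 * X 2 + X 1 * X 3 - X 4 * (1 - X 4) : MvPolynomial (Fin 5) k)}

noncomputable def q4 {k : Type*} [CommRing k] (i : Fin 5) : Q4Ring k :=
  Ideal.Quotient.mk _ (X i)

/-- The universal idempotent matrix `M` on `Q₄`, with rows
`(z, 0, x₂, -x₁)`, `(0, z, y₁, y₂)`, `(y₂, x₁, 1-z, 0)`, `(-y₁, x₂, 0, 1-z)`. -/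
noncomputable def q4UnivMatrix (k : Type*) [CommRing k] : Matrix (Fin 4) (Fin 4) (Q4Ring k) :=
  !![q4 4, 0, q4 1, -(q4 0);
     0, q4 4, q4 2, q4 3;
     q4 3, q4 0, 1 - q4 4, 0;
     -(q4 2), q4 1, 0, 1 - q4 4]

set_option maxHeartbeats 1000000 in
theorem q4UnivMatrix_idempotent (k : Type*) [CommRing k] :
    q4UnivMatrix k * q4UnivMatrix k = q4UnivMatrix k := by
  have rel : q4 0 * q4 2 + q4 1 * q4 3 = q4 4 * (1 - (q4 4 : Q4Ring k)) := by
    have : (Ideal.Quotient.mk _ (X 0 * X 2 + X 1 * X 3 - X 4 * (1 - X 4) : MvPolynomial (Fin 5) k) : Q4Ring k) = 0 := by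
      rw [Ideal.Quotient.eq_zero_iff_mem]
      exact Ideal.subset_span rfl
    simpa [q4, sub_eq_zero, map_sub, map_add, map_mul, map_one] using this
  ext i j
  rw [Matrix.mul_apply, Fin.sum_univ_four]
  fin_cases i <;> fin_cases j <;>
    simp [q4UnivMatrix] <;>
    first
    | ring1
    | linear_combination rel
end

section
/- Over the ring R = k[x_1,x_2,x_3,y_1,y_2,y_3]/(x_1 y_1 + x_2 y_2 + x_3 y_3 - 1), the matrix E with rows (y_1, 0, -x_3), (y_2, 1, 0), (y_3, -x_2 x_3^{-1}, x_1) over the localization R[x_3^{-1}] has determinant 1, and satisfies (x_1, x_2, x_3)·E = (1, 0, 0). -/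
set_option synthInstance.maxHeartbeats 1000000
set_option maxHeartbeats 1000000

open MvPolynomial

/-- The coordinate ring `R = k[x₁,x₂,x₃,y₁,y₂,y₃]/(x₁y₁ + x₂y₂ + x₃y₃ - 1)` of `Q₅`. -/
abbrev Q5Ring (k : Type*) [CommRing k] : Type _ :=
  MvPolynomial (Fin 6) k ⧸
    Ideal.span {(X 0 * X 3 + X 1 * X 4 + X 2 * X 5 - 1 : MvPolynomial (Fin 6) k)}

noncomputable def q5 {k : Type*} [CommRing k] (i : Fin 6) : Q5Ring k :=
  Ideal.Quotient.mk _ (X i)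

/-- The localization `R[x₃⁻¹]`. -/
abbrev Q5U (k : Type*) [CommRing k] : Type _ := Localization.Away (q5 (k := k) 2)

noncomputable def q5u {k : Type*} [CommRing k] (i : Fin 6) : Q5U k :=
  algebraMap (Q5Ring k) (Q5U k) (q5 i)

/-- The inverse of `x₃` in `R[x₃⁻¹]`. -/
noncomputable def x3inv (k : Type*) [CommRing k] : Q5U k :=
  IsLocalization.Away.invSelf (S := Q5U k) (q5 (k := k) 2)

/-- The elementary matrix `E` with rows `(y₁,0,-x₃)`, `(y₂,1,0)`, `(y₃,-x₂x₃⁻¹,x₁)`. -/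
noncomputable def EMat (k : Type*) [CommRing k] : Matrix (Fin 3) (Fin 3) (Q5U k) :=
  !![q5u 3, 0, -(q5u 2);
     q5u 4, 1, 0;
     q5u 5, -(q5u 1) * x3inv k, q5u 0]

lemma q5_rel {k : Type*} [CommRing k] :
    q5 (k := k) 0 * q5 3 + q5 1 * q5 4 + q5 2 * q5 5 = 1 := by
  have : (Ideal.Quotient.mk (Ideal.span {(X 0 * X 3 + X 1 * X 4 + X 2 * X 5 - 1 : MvPolynomial (Fin 6) k)}))
      (X 0 * X 3 + X 1 * X 4 + X 2 * X 5 - 1) = 0 := by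
    exact Ideal.Quotient.eq_zero_iff_mem.mpr (Ideal.subset_span rfl)
  simp only [map_sub, map_add, map_mul, map_one] at this
  have h := sub_eq_zero.mp this
  simpa [q5] using h

lemma q5u_rel {k : Type*} [CommRing k] :
    q5u (k := k) 0 * q5u 3 + q5u 1 * q5u 4 + q5u 2 * q5u 5 = 1 := by
  have := congrArg (algebraMap (Q5Ring k) (Q5U k)) (q5_rel (k := k))
  simpa [q5u, map_add, map_mul] using this

lemma x3inv_mul {k : Type*} [CommRing k] : q5u (k := k) 2 * x3inv k = 1 := by
  simpa [q5u, x3inv, mul_comm] using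
    IsLocalization.Away.mul_invSelf (S := Q5U k) (q5 (k := k) 2)

theorem EMat_props (k : Type*) [CommRing k] :
    (EMat k).det = 1 ∧
    Matrix.vecMul ![q5u 0, q5u 1, q5u 2] (EMat k) = ![1, 0, 0] := by
  have h1 := q5u_rel (k := k)
  have h2 := x3inv_mul (k := k)
  have e1 : (EMat k).det =
      q5u (k := k) 0 * q5u 3 + q5u 2 * x3inv k * (q5u 1 * q5u 4) + q5u 2 * q5u 5 := by
    simp [EMat, Matrix.det_fin_three]; ring
  refine ⟨by rw [e1, h2, one_mul]; exact h1, ?_⟩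
  funext i
  fin_cases i
  · simpa [EMat, Matrix.vecMul, dotProduct, Fin.sum_univ_three] using h1
  · have e2 : Matrix.vecMul ![q5u (k := k) 0, q5u 1, q5u 2] (EMat k) 1 =
        q5u 1 - q5u 2 * x3inv k * q5u 1 := by
      simp [EMat, Matrix.vecMul, dotProduct, Fin.sum_univ_three]; ring
    show Matrix.vecMul ![q5u (k := k) 0, q5u 1, q5u 2] (EMat k) 1 = _
    rw [e2, h2, one_mul, sub_self]; rfl
  · show Matrix.vecMul ![q5u (k := k) 0, q5u 1, q5u 2] (EMat k) 2 = _
    have e3 : Matrix.vecMul ![q5u (k := k) 0, q5u 1, q5u 2] (EMat k) 2 = 0 := by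
      simp [EMat, Matrix.vecMul, dotProduct, Fin.sum_univ_three]; ring
    rw [e3]; rfl
end

section
/- For any n ≥ 1 there exist polynomials A_n(z), B_n(z) ∈ Z[z] such that 1 = z^n A_n(z) + (1-z)^n B_n(z); consequently, over R = k[x_1,y_1,z]/(x_1y_1 - z(1-z)), the 2×2 matrix P_n with rows (z^n A_n(z), x_1^n A_n(z)) and (y_1^n B_n(z), (1-z)^n B_n(z)) satisfies P_n^2 = P_n and tr(P_n) = 1. -/
set_option synthInstance.maxHeartbeats 1000000
set_option maxHeartbeats 1000000

open MvPolynomial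

/-- `R = k[x₁,y₁,z]/(x₁y₁ - z(1-z))`, the coordinate ring of `Q₂`,
with `0 ↦ x₁, 1 ↦ y₁, 2 ↦ z`. -/
abbrev Q2Ring (k : Type) [CommRing k] : Type :=
  MvPolynomial (Fin 3) k ⧸
    Ideal.span {(X 0 * X 1 - X 2 * (1 - X 2) : MvPolynomial (Fin 3) k)}

noncomputable def q2 {k : Type} [CommRing k] (i : Fin 3) : Q2Ring k :=
  Ideal.Quotient.mk _ (X i)

/-- For each `n ≥ 1` there are `Aₙ, Bₙ ∈ ℤ[z]` with `1 = zⁿ Aₙ(z) + (1-z)ⁿ Bₙ(z)`, and the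
resulting matrix `Pₙ` with rows `(zⁿAₙ(z), x₁ⁿAₙ(z))`, `(y₁ⁿBₙ(z), (1-z)ⁿBₙ(z))` over the
coordinate ring of `Q₂` is idempotent of trace `1`. -/
theorem exists_AB_and_idempotent (n : ℕ) (hn : 1 ≤ n) :
    ∃ A B : Polynomial ℤ,
      Polynomial.X ^ n * A + (1 - Polynomial.X) ^ n * B = 1 ∧
      ∀ (k : Type) (_ : CommRing k),
        let x : Q2Ring k := q2 0
        let y : Q2Ring k := q2 1
        let z : Q2Ring k := q2 2
        let P : Matrix (Fin 2) (Fin 2) (Q2Ring k) :=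
          !![z ^ n * Polynomial.aeval z A, x ^ n * Polynomial.aeval z A;
             y ^ n * Polynomial.aeval z B, (1 - z) ^ n * Polynomial.aeval z B]
        P * P = P ∧ P.trace = 1 := by
  have hcop : IsCoprime ((Polynomial.X : Polynomial ℤ) ^ n)
      ((1 - Polynomial.X : Polynomial ℤ) ^ n) := by
    exact IsCoprime.pow ⟨1, 1, by ring⟩
  obtain ⟨A, B, hAB⟩ := hcop
  refine ⟨A, B, by linear_combination hAB, ?_⟩
  intro k _
  intro x y z P
  have hxy : x * y = z * (1 - z) := by
    have h : (Ideal.Quotient.mk (Ideal.span {(X 0 * X 1 - X 2 * (1 - X 2) :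
        MvPolynomial (Fin 3) k)})) (X 0 * X 1 - X 2 * (1 - X 2)) = 0 :=
      Ideal.Quotient.eq_zero_iff_mem.mpr (Ideal.subset_span rfl)
    have h2 : x * y - z * (1 - z) = 0 := by
      simpa [x, y, z, q2, map_sub, map_mul, map_one] using h
    linear_combination h2
  have h1 : z ^ n * Polynomial.aeval z A + (1 - z) ^ n * Polynomial.aeval z B = 1 := by
    have h := congrArg (Polynomial.aeval z) hAB
    simp only [map_add, map_mul, map_pow, map_sub, map_one, Polynomial.aeval_X] at h
    linear_combination h
  have hxyn : x ^ n * y ^ n = z ^ n * (1 - z) ^ n := by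
    rw [← mul_pow, ← mul_pow, hxy]
  constructor
  · show P * P = P
    ext i j
    fin_cases i <;> fin_cases j <;>
      simp [P, Matrix.mul_apply, Fin.sum_univ_two, Fin.mk_zero, Fin.mk_one]
    all_goals try linear_combination (x ^ n * Polynomial.aeval z A) * h1
    all_goals try linear_combination (y ^ n * Polynomial.aeval z B) * h1
    all_goals try linear_combination (z ^ n * Polynomial.aeval z A) * h1 +
        Polynomial.aeval z A * Polynomial.aeval z B * hxyn
    all_goals linear_combination ((1 - z) ^ n * Polynomial.aeval z B) * h1 +
        Polynomial.aeval z A * Polynomial.aeval z B * hxyn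
  · show P.trace = 1
    simpa [P, Matrix.trace_fin_two] using h1
end

section
/- In the ring k[J^n] of the Jouanolou device, the identity Σ_{i=1}^n x_{i(n+1)} x_{(n+1)i} = (Σ_{i=1}^n x_{ii})(1 - Σ_{i=1}^n x_{ii}) holds; hence the assignment (x_{ij}) ↦ (x_{(n+1)1},...,x_{(n+1)n}, x_{1(n+1)},...,x_{n(n+1)}, Σ_{i=1}^n x_{ii}) defines a ring homomorphism k[Q_{2n}] → k[J^n], i.e. a morphism of schemes J^n → Q_{2n}. -/
open MvPolynomial

/-- The defining relations of the Jouanolou device `𝕁ⁿ`. -/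
noncomputable def jouIdeal (k : Type*) [CommRing k] (n : ℕ) :
    Ideal (MvPolynomial (Fin (n + 1) × Fin (n + 1)) k) :=
  Ideal.span
    ({p | ∃ i j : Fin (n + 1), p = X (i, j) - ∑ r : Fin (n + 1), X (i, r) * X (r, j)} ∪
     {p | ∃ i i' j j' : Fin (n + 1), p = X (i, j) * X (i', j') - X (i, j') * X (i', j)})

/-- The coordinate ring `k[𝕁ⁿ]` of the Jouanolou device of `ℙⁿ`. -/
abbrev JouRing (k : Type*) [CommRing k] (n : ℕ) : Type _ :=
  MvPolynomial (Fin (n + 1) × Fin (n + 1)) k ⧸ jouIdeal k n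

/-- The image of the variable `x_{ij}` in `k[𝕁ⁿ]`. -/
noncomputable def xJ {k : Type*} [CommRing k] {n : ℕ} (i j : Fin (n + 1)) : JouRing k n :=
  Ideal.Quotient.mk _ (X (i, j))

/-- The coordinate ring `k[Q_{2n}] = k[u₁,…,uₙ,v₁,…,vₙ,w]/(Σ uᵢvᵢ - w(1-w))`, with
`Sum.inl (Sum.inl i) ↦ uᵢ`, `Sum.inl (Sum.inr i) ↦ vᵢ`, `Sum.inr () ↦ w`. -/
abbrev Q2nRing (k : Type*) [CommRing k] (n : ℕ) : Type _ :=
  MvPolynomial ((Fin n ⊕ Fin n) ⊕ Unit) k ⧸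
    Ideal.span {((∑ i : Fin n, X (Sum.inl (Sum.inl i)) * X (Sum.inl (Sum.inr i))) -
      X (Sum.inr ()) * (1 - X (Sum.inr ())) : MvPolynomial ((Fin n ⊕ Fin n) ⊕ Unit) k)}

noncomputable def q2n {k : Type*} [CommRing k] {n : ℕ} (s : (Fin n ⊕ Fin n) ⊕ Unit) :
    Q2nRing k n :=
  Ideal.Quotient.mk _ (X s)

lemma xJ_idem {k : Type*} [CommRing k] {n : ℕ} (i j : Fin (n + 1)) :
    (xJ (k := k) i j : JouRing k n) = ∑ r, xJ i r * xJ r j := by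
  have h : (X (i, j) - ∑ r : Fin (n + 1), X (i, r) * X (r, j) : MvPolynomial _ k) ∈
      jouIdeal k n := Ideal.subset_span (Or.inl ⟨i, j, rfl⟩)
  have h2 := (Ideal.Quotient.eq_zero_iff_mem).2 h
  simp only [map_sub, map_sum, map_mul] at h2
  simpa [xJ, sub_eq_zero] using h2

lemma xJ_minor {k : Type*} [CommRing k] {n : ℕ} (i i' j j' : Fin (n + 1)) :
    (xJ (k := k) i j * xJ i' j' : JouRing k n) = xJ i j' * xJ i' j := by
  have h : (X (i, j) * X (i', j') - X (i, j') * X (i', j) : MvPolynomial _ k) ∈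
      jouIdeal k n := Ideal.subset_span (Or.inr ⟨i, i', j, j', rfl⟩)
  have h2 := (Ideal.Quotient.eq_zero_iff_mem).2 h
  simp only [map_sub, map_mul] at h2
  simpa [xJ, sub_eq_zero] using h2

/-- The identity `Σᵢ x_{i(n+1)} x_{(n+1)i} = (Σᵢ x_{ii})(1 - Σᵢ x_{ii})` holds in `k[𝕁ⁿ]`;
hence `uᵢ ↦ x_{(n+1)i}`, `vᵢ ↦ x_{i(n+1)}`, `w ↦ Σᵢ x_{ii}` defines a ring homomorphism
`k[Q_{2n}] → k[𝕁ⁿ]`, i.e. a morphism of schemes `𝕁ⁿ → Q_{2n}`. -/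
theorem jou_to_quadric (k : Type*) [CommRing k] (n : ℕ) (hn : 1 ≤ n) :
    (∑ i : Fin n, xJ (k := k) i.castSucc (Fin.last n) * xJ (Fin.last n) i.castSucc =
      (∑ i : Fin n, xJ (k := k) i.castSucc i.castSucc) *
        (1 - ∑ i : Fin n, xJ (k := k) i.castSucc i.castSucc)) ∧
    ∃ f : Q2nRing k n →+* JouRing k n,
      (∀ i : Fin n, f (q2n (Sum.inl (Sum.inl i))) = xJ (Fin.last n) i.castSucc) ∧
      (∀ i : Fin n, f (q2n (Sum.inl (Sum.inr i))) = xJ i.castSucc (Fin.last n)) ∧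
      f (q2n (Sum.inr ())) = ∑ i : Fin n, xJ i.castSucc i.castSucc := by
  set L := Fin.last n
  set t : JouRing k n := ∑ i : Fin n, xJ i.castSucc i.castSucc with ht
  have key : ∀ i : Fin n, xJ (k := k) i.castSucc L * xJ L i.castSucc
      = xJ i.castSucc i.castSucc * (1 - t) := by
    intro i
    have h1 := xJ_idem (k := k) i.castSucc i.castSucc
    rw [Fin.sum_univ_castSucc] at h1
    have h2 : ∀ j : Fin n, xJ (k := k) i.castSucc j.castSucc * xJ j.castSucc i.castSucc
        = xJ i.castSucc i.castSucc * xJ j.castSucc j.castSucc := fun j =>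
      xJ_minor i.castSucc j.castSucc j.castSucc i.castSucc
    rw [Finset.sum_congr rfl (fun j _ => h2 j), ← Finset.mul_sum, ← ht] at h1
    have h3 : xJ (k := k) i.castSucc L * xJ L i.castSucc
        = xJ i.castSucc i.castSucc - xJ i.castSucc i.castSucc * t := by
      linear_combination -h1
    rw [h3]; ring
  have hA : ∑ i : Fin n, xJ (k := k) i.castSucc L * xJ L i.castSucc = t * (1 - t) := by
    rw [Finset.sum_congr rfl (fun i _ => key i), ← Finset.sum_mul, ← ht]
  refine ⟨hA, ?_⟩
  let g : (Fin n ⊕ Fin n) ⊕ Unit → JouRing k n := fun s =>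
    match s with
    | Sum.inl (Sum.inl i) => xJ L i.castSucc
    | Sum.inl (Sum.inr i) => xJ i.castSucc L
    | Sum.inr () => t
  let φ : MvPolynomial ((Fin n ⊕ Fin n) ⊕ Unit) k →+* JouRing k n :=
    eval₂Hom ((Ideal.Quotient.mk (jouIdeal k n)).comp C) g
  have hgen : φ ((∑ i : Fin n, X (Sum.inl (Sum.inl i)) * X (Sum.inl (Sum.inr i))) -
      X (Sum.inr ()) * (1 - X (Sum.inr ())) : MvPolynomial ((Fin n ⊕ Fin n) ⊕ Unit) k) = 0 := by
    simp only [φ, map_sub, map_sum, map_mul, map_one, eval₂Hom_X', g]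
    rw [sub_eq_zero, ← hA]
    exact Finset.sum_congr rfl fun i _ => mul_comm _ _
  refine ⟨Ideal.Quotient.lift _ φ ?_, fun i => ?_, fun i => ?_, ?_⟩
  · intro a ha
    rw [Ideal.mem_span_singleton] at ha
    obtain ⟨c, rfl⟩ := ha
    rw [map_mul, hgen, zero_mul]
  all_goals simp [q2n, Ideal.Quotient.lift_mk, φ, g]
end
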